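/- arXiv:0709.3526 — 3 statements merged into one kernel-verified Lean document; each statement's English description precedes it below -/
import Mathlib

section
/- Define, for each subset h of a finite set K, the subspace U_h = W_h ∩ (∑_{h' ⊊ h} W_{h'})^⊥ of ℝ^I with the standard inner product. Then for distinct subsets h ≠ h' of K, the subspaces U_h and U_{h'} are orthogonal. -/
/-! Suppose `h' ⊄ h`, `x ∈ W h` and `y ∈ U h'`. Summing `x` over the coordinates in `h \ h'`
gives a function of the coordinates in `h ∩ h' ⊊ h'` only, hence one orthogonal to `y`. The
summation operator is symmetric and multiplies `y ∈ W h'` by `card I`, so `⟪x, y⟫ = 0`. -/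

open scoped RealInnerProductSpace

variable {K : Type*} [Fintype K] [DecidableEq K]

/-- The subspace `W h` of `ℝ^I` (with `I = ∏ k, Fin (I k)`, standard inner product)
consisting of functions depending only on the coordinates indexed by `h`. -/
def cellW (I : K → ℕ) (h : Finset K) :
    Submodule ℝ (EuclideanSpace ℝ (∀ k, Fin (I k))) where
  carrier := {f | ∀ i j : ∀ k, Fin (I k), (∀ k ∈ h, i k = j k) → f i = f j}
  add_mem' := by
    intro f g hf hg i j hij
    simp only [PiLp.add_apply, hf i j hij, hg i j hij]
  zero_mem' := by intro i j _; rfl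
  smul_mem' := by
    intro c f hf i j hij
    simp only [PiLp.smul_apply, hf i j hij]

/-- The interaction subspace `U h = W h ∩ (∑_{h' ⊊ h} W h')ᗮ`. -/
noncomputable def cellU (I : K → ℕ) (h : Finset K) :
    Submodule ℝ (EuclideanSpace ℝ (∀ k, Fin (I k))) :=
  cellW I h ⊓ (⨆ h' ∈ h.ssubsets, cellW I h')ᗮ


section SumOver

variable {ι : Type*} [Fintype ι] [DecidableEq ι] {α : ι → Type*} [∀ i, Fintype (α i)]

/-- `card (∀ i, α i)` times the conditional expectation of `x` onto the functions of the
coordinates outside `s`. -/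
def sumOver (s : Finset ι) (x : EuclideanSpace ℝ (∀ i, α i)) : EuclideanSpace ℝ (∀ i, α i) :=
  WithLp.toLp 2 fun a => ∑ b, x (s.piecewise b a)

lemma real_inner_eq_sum_mul (x y : EuclideanSpace ℝ (∀ i, α i)) :
    ⟪x, y⟫ = ∑ a, x a * y a := by
  simp [PiLp.inner_apply, mul_comm]

omit [Fintype ι] [∀ i, Fintype (α i)] in
lemma involutive_piecewise_swap (s : Finset ι) :
    Function.Involutive fun p : (∀ i, α i) × (∀ i, α i) =>
      (s.piecewise p.2 p.1, s.piecewise p.1 p.2) := by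
  rintro ⟨a, b⟩
  ext i <;> by_cases hi : i ∈ s <;> simp [hi]

lemma inner_sumOver_left (s : Finset ι) (x y : EuclideanSpace ℝ (∀ i, α i)) :
    ⟪sumOver s x, y⟫ = ⟪x, sumOver s y⟫ := by
  let σ := (involutive_piecewise_swap (α := α) s).toPerm
  simp only [real_inner_eq_sum_mul, sumOver, Finset.sum_mul, Finset.mul_sum,
    ← Fintype.sum_prod_type']
  refine Fintype.sum_equiv σ _ _ fun p => ?_
  have hσσ := congrArg Prod.fst (involutive_piecewise_swap (α := α) s p)
  simp only [σ, Function.Involutive.coe_toPerm] at hσσ ⊢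
  rw [hσσ]

end SumOver

section Cells

variable (I : K → ℕ)

lemma sumOver_mem_cellW {s h : Finset K} {x : EuclideanSpace ℝ (∀ k, Fin (I k))}
    (hx : x ∈ cellW I h) : sumOver s x ∈ cellW I (h \ s) := by
  intro a a' haa'
  refine Finset.sum_congr rfl fun b _ => hx _ _ fun k hk => ?_
  by_cases hks : k ∈ s
  · simp [hks]
  · simp [hks, haa' k (Finset.mem_sdiff.2 ⟨hk, hks⟩)]

lemma sumOver_eq_card_smul_of_mem_cellW {s h : Finset K} (hsh : Disjoint s h)
    {y : EuclideanSpace ℝ (∀ k, Fin (I k))} (hy : y ∈ cellW I h) :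
    sumOver s y = Fintype.card (∀ k, Fin (I k)) • y := by
  ext a
  have hfix : ∀ b, y (s.piecewise b a) = y a := fun b =>
    hy _ _ fun k hk => Finset.piecewise_eq_of_notMem _ _ _ (Finset.disjoint_right.1 hsh hk)
  simp [sumOver, hfix]

lemma inner_eq_zero_of_mem_cellW_of_mem_cellU {h h' : Finset K} (hh' : ¬h' ⊆ h)
    {x y : EuclideanSpace ℝ (∀ k, Fin (I k))} (hx : x ∈ cellW I h) (hy : y ∈ cellU I h') :
    ⟪x, y⟫ = 0 := by
  have hssub : h \ (h \ h') ∈ h'.ssubsets := by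
    rw [Finset.sdiff_sdiff_self_left, Finset.mem_ssubsets]
    exact inf_lt_right.2 hh'
  have hproj : sumOver (h \ h') x ∈ ⨆ g ∈ h'.ssubsets, cellW I g :=
    Submodule.mem_iSup_of_mem _ (Submodule.mem_iSup_of_mem hssub (sumOver_mem_cellW I hx))
  have hcard : ⟪sumOver (h \ h') x, y⟫ = Fintype.card (∀ k, Fin (I k)) * ⟪x, y⟫ := by
    rw [inner_sumOver_left, sumOver_eq_card_smul_of_mem_cellW I Finset.sdiff_disjoint hy.1,
      ← Nat.cast_smul_eq_nsmul ℝ, real_inner_smul_right]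
  rcases isEmpty_or_nonempty (∀ k, Fin (I k)) with hI | hI
  · simp [real_inner_eq_sum_mul]
  · rw [Submodule.inner_right_of_mem_orthogonal hproj hy.2] at hcard
    exact (mul_eq_zero.1 hcard.symm).resolve_left (by positivity)

end Cells

/-- For distinct subsets `h ≠ h'` of `K`, the interaction subspaces `U h` and `U h'`
are orthogonal. -/
theorem cellU_orthogonal (I : K → ℕ) (h h' : Finset K) (hne : h ≠ h') :
    ∀ x ∈ cellU I h, ∀ y ∈ cellU I h', ⟪x, y⟫ = 0 := by
  intro x hx y hy
  by_cases hh' : h' ⊆ h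
  · rw [real_inner_comm]
    exact inner_eq_zero_of_mem_cellW_of_mem_cellU I
      (fun hh => hne (hh.antisymm hh')) hy.1 hx
  · exact inner_eq_zero_of_mem_cellW_of_mem_cellU I hh' hx.1 hy
end

section
/- With U_h = W_h ∩ (∑_{h' ⊊ h} W_{h'})^⊥, for every h ⊆ K one has the orthogonal direct sum decomposition W_h = ⊕_{h' ⊆ h} U_{h'}; in particular ℝ^I = ⊕_{h ⊆ K} U_h. -/
open scoped RealInnerProductSpace

variable {K : Type*} [Fintype K] [DecidableEq K]

/-!
A vector of `W h` is orthogonal to `U h'` as soon as `h' ⊄ h`: averaging `x ∈ W h` over the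
coordinates outside `h'` lands in `W (h' ∩ h)`, a proper part of the span that `U h'` is
orthogonal to, and this average has the same inner product with `y ∈ W h'` as `x` itself.
The decomposition `W h = ⊕_{h' ⊆ h} U h'` then follows by strong induction on `h`, splitting
`W h` as `(∑_{h' ⊊ h} W h') ⊕ U h`.
-/

open Finset

/-- Swapping the `s`-coordinates of a pair of points is an involution of pairs. -/
theorem Finset.sum_sum_piecewise {ι : Type*} {β : ι → Type*} [Fintype (∀ k, β k)]
    {M : Type*} [AddCommMonoid M] (s : Finset ι) [∀ k, Decidable (k ∈ s)]
    (F : (∀ k, β k) → M) :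
    ∑ i, ∑ j, F (s.piecewise i j) = Fintype.card (∀ k, β k) • ∑ i, F i := by
  let σ : (∀ k, β k) × (∀ k, β k) → (∀ k, β k) × (∀ k, β k) :=
    fun p => (s.piecewise p.1 p.2, s.piecewise p.2 p.1)
  have hσ : Function.Involutive σ := fun p => by
    ext k <;> by_cases hk : k ∈ s <;> simp [σ, piecewise_eq_of_mem, piecewise_eq_of_notMem, hk]
  calc ∑ i, ∑ j, F (s.piecewise i j) = ∑ p, F (σ p).1 := (Fintype.sum_prod_type' _).symm
    _ = ∑ p : (∀ k, β k) × (∀ k, β k), F p.1 := Equiv.sum_comp hσ.toPerm fun p => F p.1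
    _ = Fintype.card (∀ k, β k) • ∑ i, F i := by
      simp only [Fintype.sum_prod_type, sum_const, card_univ, smul_sum]

variable {I : K → ℕ}

omit [Fintype K] [DecidableEq K] in
theorem cellW_mono {h h' : Finset K} (hsub : h ⊆ h') : cellW I h ≤ cellW I h' :=
  fun _ hf i j hij => hf i j fun k hk => hij k (hsub hk)

omit [DecidableEq K] in
theorem cellW_univ : cellW I univ = ⊤ :=
  top_unique fun _ _ _ _ hij => congrArg _ (funext fun k => hij k (mem_univ k))

omit [Fintype K] in
theorem toLp_comp_piecewise_mem_cellW {h : Finset K} {x : EuclideanSpace ℝ (∀ k, Fin (I k))}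
    (hx : x ∈ cellW I h) (h' : Finset K) (j : ∀ k, Fin (I k)) :
    WithLp.toLp 2 (fun i => x (h'.piecewise i j)) ∈ cellW I (h' ∩ h) := by
  intro i i' hii'
  refine hx _ _ fun k hk => ?_
  by_cases hk' : k ∈ h'
  · simp [piecewise_eq_of_mem, hk', hii' k (mem_inter.2 ⟨hk', hk⟩)]
  · simp [piecewise_eq_of_notMem, hk']

theorem inner_eq_zero_of_mem_orthogonal_cellW_inter {h h' : Finset K}
    {x y : EuclideanSpace ℝ (∀ k, Fin (I k))} (hx : x ∈ cellW I h) (hy : y ∈ cellW I h')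
    (hy' : y ∈ (cellW I (h' ∩ h))ᗮ) : ⟪x, y⟫ = 0 := by
  have hy_pw : ∀ i j, y (h'.piecewise i j) = y i := fun i j =>
    hy _ _ fun k hk => piecewise_eq_of_mem _ _ _ hk
  have hsum : ∑ j, ⟪WithLp.toLp 2 (fun i => x (h'.piecewise i j)), y⟫ =
      Fintype.card (∀ k, Fin (I k)) • ⟪x, y⟫ := by
    simp only [PiLp.inner_apply]
    rw [sum_comm, ← sum_sum_piecewise h' fun m => ⟪x m, y m⟫]
    simp only [hy_pw]
  have hzero : Fintype.card (∀ k, Fin (I k)) • ⟪x, y⟫ = 0 := by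
    rw [← hsum]
    exact sum_eq_zero fun j _ =>
      Submodule.inner_right_of_mem_orthogonal (toLp_comp_piecewise_mem_cellW hx h' j) hy'
  rcases smul_eq_zero.1 hzero with hcard | hxy
  · have : IsEmpty (∀ k, Fin (I k)) := Fintype.card_eq_zero_iff.1 hcard
    rw [PiLp.inner_apply, univ_eq_empty, sum_empty]
  · exact hxy

theorem inner_eq_zero_of_mem_cellU_of_not_subset {h h' : Finset K} (hns : ¬h' ⊆ h)
    {x y : EuclideanSpace ℝ (∀ k, Fin (I k))} (hx : x ∈ cellU I h) (hy : y ∈ cellU I h') :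
    ⟪x, y⟫ = 0 := by
  have hss : h' ∩ h ∈ h'.ssubsets := mem_ssubsets.2 <|
    inter_subset_left.ssubset_of_not_subset fun hc => hns (hc.trans inter_subset_right)
  exact inner_eq_zero_of_mem_orthogonal_cellW_inter hx.1 hy.1
    (Submodule.orthogonal_le (le_iSup₂_of_le (f := fun t _ => cellW I t) _ hss le_rfl) hy.2)

theorem cellW_eq_iSup_cellU (h : Finset K) : cellW I h = ⨆ t ∈ h.powerset, cellU I t := by
  induction h using Finset.strongInduction with
  | H h ih =>
  set V := ⨆ t ∈ h.ssubsets, cellW I t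
  have hVW : V ≤ cellW I h := iSup₂_le fun t ht => cellW_mono (mem_ssubsets.1 ht).1
  have hV : V = ⨆ t ∈ h.ssubsets, cellU I t := by
    refine le_antisymm (iSup₂_le fun t ht => ?_) (iSup₂_mono fun t _ => inf_le_left)
    rw [ih t (mem_ssubsets.1 ht)]
    exact iSup₂_le fun s hs => le_iSup₂_of_le (f := fun t _ => cellU I t) s
      (mem_ssubsets.2 ((mem_powerset.1 hs).trans_ssubset (mem_ssubsets.1 ht))) le_rfl
  calc cellW I h = V ⊔ Vᗮ ⊓ cellW I h :=
        (Submodule.sup_orthogonal_inf_of_hasOrthogonalProjection hVW).symm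
    _ = cellU I h ⊔ V := by rw [inf_comm, sup_comm]; rfl
    _ = ⨆ t ∈ h.powerset, cellU I t := by
      rw [hV, ← insert_erase (mem_powerset_self h), Finset.iSup_insert]; rfl

theorem cellW_eq_directSum_cellU_general (I : K → ℕ) :
    (∀ h h' : Finset K, h ≠ h' → ∀ x ∈ cellU I h, ∀ y ∈ cellU I h', ⟪x, y⟫ = 0) ∧
    (∀ h : Finset K, cellW I h = ⨆ h' ∈ h.powerset, cellU I h') ∧
    (⨆ h : Finset K, cellU I h) = (⊤ : Submodule ℝ (EuclideanSpace ℝ (∀ k, Fin (I k)))) := by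
  refine ⟨fun h h' hne x hx y hy => ?_, cellW_eq_iSup_cellU, ?_⟩
  · by_cases hsub : h' ⊆ h
    · rw [real_inner_comm]
      exact inner_eq_zero_of_mem_cellU_of_not_subset (fun h_sub => hne (h_sub.antisymm hsub)) hy hx
    · exact inner_eq_zero_of_mem_cellU_of_not_subset hsub hx hy
  · refine top_unique ?_
    rw [← cellW_univ, cellW_eq_iSup_cellU]
    exact iSup₂_le fun t _ => le_iSup (fun t => cellU I t) t

/-- Orthogonal direct sum decomposition: `W h = ⊕_{h' ⊆ h} U h'` (the `U h'` being
pairwise orthogonal); in particular, for `h = K`, `ℝ^I = ⊕_{h ⊆ K} U h`. -/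
theorem cellW_eq_directSum_cellU (I : K → ℕ) (hI : ∀ k, 1 ≤ I k) :
    (∀ h h' : Finset K, h ≠ h' → ∀ x ∈ cellU I h, ∀ y ∈ cellU I h', ⟪x, y⟫ = 0) ∧
    (∀ h : Finset K, cellW I h = ⨆ h' ∈ h.powerset, cellU I h') ∧
    (⨆ h : Finset K, cellU I h) = (⊤ : Submodule ℝ (EuclideanSpace ℝ (∀ k, Fin (I k)))) :=
  cellW_eq_directSum_cellU_general I
end

section
/- Let X be a Poisson random variable with parameter λ > 0. For every function h : ℕ → ℝ with sup_{x∈ℕ} |h(x+1) − h(x)| ≤ 1 and for every b ≥ 0, P(h(X) − E[h(X)] ≥ b) ≤ exp(−(b/4) log(1 + b/(2λ))). -/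
/-!
Let `Y` be an independent copy of `X ~ Poisson(λ)`. By Jensen,
`E e^{t (h X - E h X)} ≤ E e^{t h X} E e^{-t h Y} = E e^{t (h X - h Y)}`, and since the law of
`h X - h Y` is symmetric this equals `E cosh (t (h X - h Y))`. As `cosh` increases with `|·|` and
`|h X - h Y| ≤ |X - Y|`, it is at most `E cosh (t (X - Y)) = exp (2λ (cosh t - 1))`.
Chernoff's bound at `t = log (1 + b / (2λ))` then gives even the exponent
`-(b / 2) log (1 + b / (2λ))`.
-/

open MeasureTheory ProbabilityTheory Real
open scoped NNReal Nat

section Symmetrization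

variable {Ω : Type*} [MeasurableSpace Ω] {μ : Measure Ω} {X Y : Ω → ℝ} {t : ℝ}

lemma exp_mul_sub_eq (s a b : ℝ) : exp (s * (a - b)) = exp (s * a) * exp (-s * b) := by
  rw [← exp_add]; ring_nf

lemma integrable_exp_mul_sub_prod [SFinite μ] (hpos : Integrable (fun ω ↦ exp (t * X ω)) μ)
    (hneg : Integrable (fun ω ↦ exp (-t * X ω)) μ) :
    Integrable (fun p : Ω × Ω ↦ exp (t * (X p.1 - X p.2))) (μ.prod μ) := by
  simpa only [exp_mul_sub_eq] using hpos.mul_prod hneg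

lemma integrable_cosh_mul_sub_prod [SFinite μ] (hpos : Integrable (fun ω ↦ exp (t * X ω)) μ)
    (hneg : Integrable (fun ω ↦ exp (-t * X ω)) μ) :
    Integrable (fun p : Ω × Ω ↦ cosh (t * (X p.1 - X p.2))) (μ.prod μ) := by
  have hpos' : Integrable (fun ω ↦ exp (- -t * X ω)) μ := by simpa only [neg_neg] using hpos
  simp only [cosh_eq, ← neg_mul]
  exact ((integrable_exp_mul_sub_prod hpos hneg).add
    (integrable_exp_mul_sub_prod hneg hpos')).div_const 2

lemma mgf_mul_mgf_neg_eq_integral_cosh [SFinite μ] (hpos : Integrable (fun ω ↦ exp (t * X ω)) μ)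
    (hneg : Integrable (fun ω ↦ exp (-t * X ω)) μ) :
    mgf X μ t * mgf X μ (-t) = ∫ p, cosh (t * (X p.1 - X p.2)) ∂μ.prod μ := by
  have hprod (s : ℝ) :
      mgf X μ s * mgf X μ (-s) = ∫ p, exp (s * (X p.1 - X p.2)) ∂μ.prod μ := by
    simp only [mgf, exp_mul_sub_eq]
    exact (integral_prod_mul _ _).symm
  have hpos' : Integrable (fun ω ↦ exp (- -t * X ω)) μ := by simpa only [neg_neg] using hpos
  simp only [cosh_eq, integral_div, ← neg_mul, integral_add (integrable_exp_mul_sub_prod hpos hneg)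
    (integrable_exp_mul_sub_prod hneg hpos'), ← hprod, neg_neg]
  ring

lemma mgf_mul_mgf_neg_le_of_abs_sub_le [SFinite μ]
    (hXY : ∀ ω ω', |X ω - X ω'| ≤ |Y ω - Y ω'|)
    (hXpos : Integrable (fun ω ↦ exp (t * X ω)) μ)
    (hXneg : Integrable (fun ω ↦ exp (-t * X ω)) μ)
    (hYpos : Integrable (fun ω ↦ exp (t * Y ω)) μ)
    (hYneg : Integrable (fun ω ↦ exp (-t * Y ω)) μ) :
    mgf X μ t * mgf X μ (-t) ≤ mgf Y μ t * mgf Y μ (-t) := by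
  rw [mgf_mul_mgf_neg_eq_integral_cosh hXpos hXneg, mgf_mul_mgf_neg_eq_integral_cosh hYpos hYneg]
  refine integral_mono_of_nonneg (.of_forall fun p ↦ (cosh_pos _).le)
    (integrable_cosh_mul_sub_prod hYpos hYneg) (.of_forall fun p ↦ ?_)
  simp only [cosh_le_cosh, abs_mul]
  exact mul_le_mul_of_nonneg_left (hXY p.1 p.2) (abs_nonneg t)

lemma exp_mul_integral_le_mgf [IsProbabilityMeasure μ] (hX : Integrable X μ)
    (hexp : Integrable (fun ω ↦ exp (t * X ω)) μ) : exp (t * μ[X]) ≤ mgf X μ t := by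
  rw [← integral_const_mul]
  exact convexOn_exp.map_integral_le continuous_exp.continuousOn isClosed_univ
    (.of_forall fun _ ↦ Set.mem_univ _) (hX.const_mul t) hexp

lemma mgf_sub_integral_le [IsProbabilityMeasure μ] (hX : Integrable X μ)
    (hneg : Integrable (fun ω ↦ exp (-t * X ω)) μ) :
    mgf (fun ω ↦ X ω - μ[X]) μ t ≤ mgf X μ t * mgf X μ (-t) := by
  simp only [sub_eq_add_neg, mgf_add_const]
  gcongr
  · exact mgf_nonneg
  · simpa only [mul_neg, neg_mul] using exp_mul_integral_le_mgf hX hneg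

end Symmetrization

lemma abs_sub_le_of_abs_succ_sub_le_one {f : ℕ → ℝ} (hf : ∀ n, |f (n + 1) - f n| ≤ 1)
    (m n : ℕ) :
    |f m - f n| ≤ |(m : ℝ) - n| := by
  wlog hnm : n ≤ m generalizing m n
  · rw [abs_sub_comm, abs_sub_comm (m : ℝ)]
    exact this n m (by omega)
  have h := dist_le_Ico_sum_of_dist_le hnm (d := fun _ ↦ 1) fun _ _ ↦ by
    rw [Real.dist_eq, abs_sub_comm]; exact hf _
  rw [abs_of_nonneg (sub_nonneg.2 (Nat.cast_le.2 hnm))]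
  simpa [Real.dist_eq, abs_sub_comm, Nat.cast_sub hnm] using h

section Poisson

variable {r : ℝ≥0} {f : ℕ → ℝ}

lemma hasSum_poissonMeasure_exp_mul (r : ℝ≥0) (t : ℝ) :
    HasSum (fun n : ℕ ↦ exp (-r) * r ^ n / n ! * exp (t * n)) (exp (r * (exp t - 1))) := by
  have h := (NormedSpace.expSeries_div_hasSum_exp ((r : ℝ) * exp t)).mul_left (exp (-r))
  rw [← exp_eq_exp_ℝ, ← exp_add] at h
  rw [show (r : ℝ) * (exp t - 1) = -r + r * exp t by ring]
  refine h.congr_fun fun n ↦ ?_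
  rw [mul_pow, ← exp_nat_mul, mul_comm (n : ℝ)]
  ring

lemma integrable_exp_mul_natCast_poissonMeasure (r : ℝ≥0) (t : ℝ) :
    Integrable (fun n : ℕ ↦ exp (t * n)) (poissonMeasure r) := by
  rw [integrable_poissonMeasure_iff]
  simpa only [Real.norm_eq_abs, abs_exp] using (hasSum_poissonMeasure_exp_mul r t).summable

lemma mgf_natCast_poissonMeasure (r : ℝ≥0) (t : ℝ) :
    mgf (fun n : ℕ ↦ (n : ℝ)) (poissonMeasure r) t = exp (r * (exp t - 1)) := by
  rw [mgf, integral_poissonMeasure]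
  exact (hasSum_poissonMeasure_exp_mul r t).tsum_eq

lemma integrable_exp_mul_poissonMeasure (hf : ∀ n, |f (n + 1) - f n| ≤ 1) (r : ℝ≥0)
    (t : ℝ) :
    Integrable (fun n ↦ exp (t * f n)) (poissonMeasure r) := by
  refine ((integrable_exp_mul_natCast_poissonMeasure r |t|).const_mul (exp (t * f 0))).mono'
    .of_discrete (.of_forall fun n ↦ ?_)
  have hn : |f n - f 0| ≤ n := by
    simpa using abs_sub_le_of_abs_succ_sub_le_one hf n 0
  rw [Real.norm_eq_abs, abs_exp, ← exp_add, exp_le_exp]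
  calc t * f n = t * f 0 + t * (f n - f 0) := by ring
    _ ≤ t * f 0 + |t| * n := add_le_add_right ((le_abs_self _).trans
        ((abs_mul _ _).trans_le (mul_le_mul_of_nonneg_left hn (abs_nonneg t)))) _

lemma mgf_sub_integral_poissonMeasure_le (hf : ∀ n, |f (n + 1) - f n| ≤ 1)
    (hfi : Integrable f (poissonMeasure r)) (t : ℝ) :
    mgf (fun n ↦ f n - ∫ k, f k ∂poissonMeasure r) (poissonMeasure r) t
      ≤ exp (2 * r * (cosh t - 1)) := by
  calc _ ≤ mgf f (poissonMeasure r) t * mgf f (poissonMeasure r) (-t) :=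
        mgf_sub_integral_le hfi (integrable_exp_mul_poissonMeasure hf r (-t))
    _ ≤ mgf (fun n : ℕ ↦ (n : ℝ)) (poissonMeasure r) t
          * mgf (fun n : ℕ ↦ (n : ℝ)) (poissonMeasure r) (-t) :=
        mgf_mul_mgf_neg_le_of_abs_sub_le (abs_sub_le_of_abs_succ_sub_le_one hf)
          (integrable_exp_mul_poissonMeasure hf r t) (integrable_exp_mul_poissonMeasure hf r (-t))
          (integrable_exp_mul_natCast_poissonMeasure r t)
          (integrable_exp_mul_natCast_poissonMeasure r (-t))
    _ = exp (2 * r * (cosh t - 1)) := by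
        rw [mgf_natCast_poissonMeasure, mgf_natCast_poissonMeasure, ← exp_add, cosh_eq]
        ring_nf

end Poisson

lemma cosh_log_one_add_sub_one_le {u : ℝ} (hu : 0 ≤ u) :
    cosh (log (1 + u)) - 1 ≤ u / 2 * log (1 + u) := by
  have hpos : 0 < 1 + u := by linarith
  have hlog := one_sub_inv_le_log_of_pos hpos
  rw [cosh_log hpos]
  calc (1 + u + (1 + u)⁻¹) / 2 - 1 = u / 2 * (1 - (1 + u)⁻¹) := by field_simp; ring
    _ ≤ u / 2 * log (1 + u) := by gcongr

/-- Concentration for Poisson random variables (Bobkov–Ledoux): if `X ~ Poisson(λ)`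
with `λ > 0` and `h : ℕ → ℝ` satisfies `|h(x+1) − h(x)| ≤ 1` for all `x`, then for
every `b ≥ 0`, `P(h(X) − E[h(X)] ≥ b) ≤ exp(−(b/4) log(1 + b/(2λ)))`. -/
theorem poisson_lipschitz_concentration (lam : NNReal) (hlam : 0 < lam)
    (h : ℕ → ℝ) (hlip : ∀ x : ℕ, |h (x + 1) - h x| ≤ 1)
    (hint : Integrable h (poissonMeasure lam))
    (b : ℝ) (hb : 0 ≤ b) :
    ((poissonMeasure lam) {x | b ≤ h x - ∫ y, h y ∂(poissonMeasure lam)}).toReal ≤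
      Real.exp (-(b / 4) * Real.log (1 + b / (2 * lam))) := by
  set m := ∫ y, h y ∂poissonMeasure lam
  set u := b / (2 * lam)
  set t := log (1 + u)
  have hu : 0 ≤ u := by positivity
  have ht : 0 ≤ t := log_nonneg (by linarith)
  have hlamu : (lam : ℝ) * u = b / 2 := by
    have : (lam : ℝ) ≠ 0 := (NNReal.coe_pos.2 hlam).ne'
    simp only [u]
    field_simp
  have hlip_centered : ∀ n, |(h (n + 1) - m) - (h n - m)| ≤ 1 := fun n ↦ by simpa using hlip n
  calc _ ≤ exp (-t * b) * mgf (fun n ↦ h n - m) (poissonMeasure lam) t :=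
        measure_ge_le_exp_mul_mgf b ht (integrable_exp_mul_poissonMeasure hlip_centered lam t)
    _ ≤ exp (-t * b) * exp (2 * lam * (cosh t - 1)) := by
        gcongr
        exact mgf_sub_integral_poissonMeasure_le hlip hint t
    _ ≤ exp (-(b / 4) * t) := by
        rw [← exp_add, exp_le_exp]
        nlinarith [cosh_log_one_add_sub_one_le hu, mul_nonneg hb ht]
end
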